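/- Let u: ℝ² → ℝ be a smooth solution of the generalized Liouville equation D_x² u_{xy} = e^u (the k = 1 case). Then λ = −D_x²u_{yy} + u_y·D_x²u_y − ½(D_x u_y)² satisfies ∂λ/∂x = 0. -/

import Mathlib

/-- partial derivative in the first variable (x) -/
noncomputable def pdx (u : ℝ → ℝ → ℝ) : ℝ → ℝ → ℝ := fun x y => deriv (fun x' => u x' y) x
/-- partial derivative in the second variable (y) -/
noncomputable def pdy (u : ℝ → ℝ → ℝ) : ℝ → ℝ → ℝ := fun x y => deriv (fun y' => u x y') y

section Aux

variable {u : ℝ → ℝ → ℝ}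

lemma hasDerivAt_sliceX (hu : ContDiff ℝ (⊤ : ℕ∞) (fun p : ℝ × ℝ => u p.1 p.2)) (x y : ℝ) :
    HasDerivAt (fun x' => u x' y)
      (fderiv ℝ (fun p : ℝ × ℝ => u p.1 p.2) (x, y) (1, 0)) x :=
  (hu.differentiable (by simp) (x, y)).hasFDerivAt.comp_hasDerivAt (f := fun x' : ℝ => (x', y)) x
    ((hasDerivAt_id' x).prodMk (hasDerivAt_const x y))

lemma hasDerivAt_sliceY (hu : ContDiff ℝ (⊤ : ℕ∞) (fun p : ℝ × ℝ => u p.1 p.2)) (x y : ℝ) :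
    HasDerivAt (fun y' => u x y')
      (fderiv ℝ (fun p : ℝ × ℝ => u p.1 p.2) (x, y) (0, 1)) y :=
  (hu.differentiable (by simp) (x, y)).hasFDerivAt.comp_hasDerivAt y
    ((hasDerivAt_const y x).prodMk (hasDerivAt_id y))

lemma pdx_eq (hu : ContDiff ℝ (⊤ : ℕ∞) (fun p : ℝ × ℝ => u p.1 p.2)) (x y : ℝ) :
    pdx u x y = fderiv ℝ (fun p : ℝ × ℝ => u p.1 p.2) (x, y) (1, 0) :=
  (hasDerivAt_sliceX hu x y).deriv

lemma pdy_eq (hu : ContDiff ℝ (⊤ : ℕ∞) (fun p : ℝ × ℝ => u p.1 p.2)) (x y : ℝ) :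
    pdy u x y = fderiv ℝ (fun p : ℝ × ℝ => u p.1 p.2) (x, y) (0, 1) :=
  (hasDerivAt_sliceY hu x y).deriv

lemma hasDerivAt_pdx (hu : ContDiff ℝ (⊤ : ℕ∞) (fun p : ℝ × ℝ => u p.1 p.2)) (x y : ℝ) :
    HasDerivAt (fun x' => u x' y) (pdx u x y) x := by
  rw [pdx_eq hu]; exact hasDerivAt_sliceX hu x y

lemma hasDerivAt_pdy (hu : ContDiff ℝ (⊤ : ℕ∞) (fun p : ℝ × ℝ => u p.1 p.2)) (x y : ℝ) :
    HasDerivAt (fun y' => u x y') (pdy u x y) y := by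
  rw [pdy_eq hu]; exact hasDerivAt_sliceY hu x y

lemma contDiff_pdx (hu : ContDiff ℝ (⊤ : ℕ∞) (fun p : ℝ × ℝ => u p.1 p.2)) :
    ContDiff ℝ (⊤ : ℕ∞) (fun p : ℝ × ℝ => pdx u p.1 p.2) := by
  have : (fun p : ℝ × ℝ => pdx u p.1 p.2)
      = fun p : ℝ × ℝ => fderiv ℝ (fun q : ℝ × ℝ => u q.1 q.2) p ((1 : ℝ), (0 : ℝ)) := by
    funext p
    rw [pdx_eq hu]
  rw [this]
  exact (hu.fderiv_right (by simp)).clm_apply contDiff_const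

lemma contDiff_pdy (hu : ContDiff ℝ (⊤ : ℕ∞) (fun p : ℝ × ℝ => u p.1 p.2)) :
    ContDiff ℝ (⊤ : ℕ∞) (fun p : ℝ × ℝ => pdy u p.1 p.2) := by
  have : (fun p : ℝ × ℝ => pdy u p.1 p.2)
      = fun p : ℝ × ℝ => fderiv ℝ (fun q : ℝ × ℝ => u q.1 q.2) p ((0 : ℝ), (1 : ℝ)) := by
    funext p
    rw [pdy_eq hu]
  rw [this]
  exact (hu.fderiv_right (by simp)).clm_apply contDiff_const

/-- Clairaut's theorem for smooth functions, in `pdx`/`pdy` form. -/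
lemma pdx_pdy_comm (hu : ContDiff ℝ (⊤ : ℕ∞) (fun p : ℝ × ℝ => u p.1 p.2)) :
    pdx (pdy u) = pdy (pdx u) := by
  funext x y
  set F : ℝ × ℝ → ℝ := fun p => u p.1 p.2 with hF
  have hF' : ContDiff ℝ (⊤ : ℕ∞) (fderiv ℝ F) := hu.fderiv_right (by simp)
  -- second derivative as a bilinear object
  have hdF' : HasFDerivAt (fderiv ℝ F) (fderiv ℝ (fderiv ℝ F) (x, y)) (x, y) :=
    (hF'.differentiable (by simp) (x, y)).hasFDerivAt
  have hsymm := second_derivative_symmetric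
    (fun p => (hu.differentiable (by simp) p).hasFDerivAt) hdF'
  -- compute pdx (pdy u) x y
  have hx : HasDerivAt (fun x' => fderiv ℝ F (x', y))
      (fderiv ℝ (fderiv ℝ F) (x, y) ((1 : ℝ), (0 : ℝ))) x :=
    hdF'.comp_hasDerivAt x ((hasDerivAt_id x).prodMk (hasDerivAt_const x y))
  have hy : HasDerivAt (fun y' => fderiv ℝ F (x, y'))
      (fderiv ℝ (fderiv ℝ F) (x, y) ((0 : ℝ), (1 : ℝ))) y :=
    hdF'.comp_hasDerivAt y ((hasDerivAt_const y x).prodMk (hasDerivAt_id y))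
  have h1 : pdx (pdy u) x y
      = fderiv ℝ (fderiv ℝ F) (x, y) ((1 : ℝ), (0 : ℝ)) ((0 : ℝ), (1 : ℝ)) := by
    have : (fun x' => pdy u x' y) = fun x' => fderiv ℝ F (x', y) ((0 : ℝ), (1 : ℝ)) := by
      funext x'
      exact pdy_eq hu x' y
    show deriv (fun x' => pdy u x' y) x = _
    rw [this]
    have := hx.clm_apply (hasDerivAt_const x ((0 : ℝ), (1 : ℝ)))
    simpa using this.deriv
  have h2 : pdy (pdx u) x y
      = fderiv ℝ (fderiv ℝ F) (x, y) ((0 : ℝ), (1 : ℝ)) ((1 : ℝ), (0 : ℝ)) := by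
    have : (fun y' => pdx u x y') = fun y' => fderiv ℝ F (x, y') ((1 : ℝ), (0 : ℝ)) := by
      funext y'
      exact pdx_eq hu x y'
    show deriv (fun y' => pdx u x y') y = _
    rw [this]
    have := hy.clm_apply (hasDerivAt_const y ((1 : ℝ), (0 : ℝ)))
    simpa using this.deriv
  rw [h1, h2, hsymm]

end Aux

/-- For a smooth solution of the generalized Liouville equation
`u_{xxxy} = e^u` (the `k = 1` case), the quantity
`λ = −u_{xxyy} + u_y·u_{xxy} − ½ u_{xy}²` satisfies `∂λ/∂x = 0`. -/
theorem stmt15 (u : ℝ → ℝ → ℝ)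
    (hu : ContDiff ℝ (⊤ : ℕ∞) (fun p : ℝ × ℝ => u p.1 p.2))
    (hpde : ∀ x y, pdx (pdx (pdx (pdy u))) x y = Real.exp (u x y)) :
    ∀ x y, deriv (fun x' =>
      -pdx (pdx (pdy (pdy u))) x' y + pdy u x' y * pdx (pdx (pdy u)) x' y
        - (1 / 2) * (pdx (pdy u) x' y) ^ 2) x = 0 := by
  intro x y
  -- smoothness of the iterated partials
  have cY : ContDiff ℝ (⊤ : ℕ∞) (fun p : ℝ × ℝ => pdy u p.1 p.2) := contDiff_pdy hu
  have cXY : ContDiff ℝ (⊤ : ℕ∞) (fun p : ℝ × ℝ => pdx (pdy u) p.1 p.2) := contDiff_pdx cY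
  have cXXY : ContDiff ℝ (⊤ : ℕ∞) (fun p : ℝ × ℝ => pdx (pdx (pdy u)) p.1 p.2) := contDiff_pdx cXY
  have cYY : ContDiff ℝ (⊤ : ℕ∞) (fun p : ℝ × ℝ => pdy (pdy u) p.1 p.2) := contDiff_pdy cY
  have cXYY : ContDiff ℝ (⊤ : ℕ∞) (fun p : ℝ × ℝ => pdx (pdy (pdy u)) p.1 p.2) := contDiff_pdx cYY
  have cXXYY : ContDiff ℝ (⊤ : ℕ∞) (fun p : ℝ × ℝ => pdx (pdx (pdy (pdy u))) p.1 p.2) :=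
    contDiff_pdx cXYY
  -- derivatives in x of each term
  have h1 : HasDerivAt (fun x' => pdx (pdx (pdy (pdy u))) x' y)
      (pdx (pdx (pdx (pdy (pdy u)))) x y) x := hasDerivAt_pdx cXXYY x y
  have h2 : HasDerivAt (fun x' => pdy u x' y) (pdx (pdy u) x y) x := hasDerivAt_pdx cY x y
  have h3 : HasDerivAt (fun x' => pdx (pdx (pdy u)) x' y)
      (pdx (pdx (pdx (pdy u))) x y) x := hasDerivAt_pdx cXXY x y
  have h4 : HasDerivAt (fun x' => pdx (pdy u) x' y)
      (pdx (pdx (pdy u)) x y) x := hasDerivAt_pdx cXY x y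
  have H := ((h1.neg.add (h2.mul h3)).sub ((h4.pow 2).const_mul ((1 : ℝ) / 2)))
  rw [show deriv (fun x' =>
      -pdx (pdx (pdy (pdy u))) x' y + pdy u x' y * pdx (pdx (pdy u)) x' y
        - (1 / 2) * (pdx (pdy u) x' y) ^ 2) x = _ from H.deriv]
  -- commute derivatives: u_{xxyyx} = (e^u)_y
  have e1 : pdx (pdy (pdy u)) = pdy (pdx (pdy u)) := pdx_pdy_comm cY
  have e2 : pdx (pdy (pdx (pdy u))) = pdy (pdx (pdx (pdy u))) := pdx_pdy_comm cXY
  have e3 : pdx (pdy (pdx (pdx (pdy u)))) = pdy (pdx (pdx (pdx (pdy u)))) := pdx_pdy_comm cXXY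
  have key : pdx (pdx (pdx (pdy (pdy u)))) x y = Real.exp (u x y) * pdy u x y := by
    rw [e1, e2, e3]
    have hfun : pdx (pdx (pdx (pdy u))) = fun a b => Real.exp (u a b) := by
      funext a b; exact hpde a b
    rw [hfun]
    show deriv (fun y' => Real.exp (u x y')) y = _
    exact ((hasDerivAt_pdy hu x y).exp).deriv
  rw [key, hpde x y]
  ring
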